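/- arXiv:2009.08443 — 7 statements merged into one kernel-verified Lean document; each statement's English description precedes it below -/
import Mathlib

section
/- Let S be an additively idempotent commutative semiring, A an associative S-semialgebra that is additively idempotent, and R : A → A an S-linear Rota–Baxter map of weight λ ∈ S, i.e. R(x) ⊙ R(y) = R(R(x) ⊙ y ⊕ x ⊙ R(y)) ⊕ λ R(x ⊙ y) for all x, y ∈ A. Then the map R̃ defined by R̃(x) := λx ⊕ R(x) satisfies the weight-zero Rota–Baxter identity R̃(x) ⊙ R̃(y) = R̃( R̃(x) ⊙ y ⊕ x ⊙ R̃(y) ) for all x, y ∈ A. -/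
/-- **Rota–Baxter maps over idempotent semirings.**
Let `S` be an additively idempotent commutative semiring, `A` an associative
`S`-semialgebra that is additively idempotent, and `R : A → A` an `S`-linear
Rota–Baxter map of weight `λ ∈ S`, i.e.
`R x ⊙ R y = R (R x ⊙ y ⊕ x ⊙ R y) ⊕ λ • R (x ⊙ y)`.
Then `R̃ x := λ • x ⊕ R x` satisfies the weight-zero Rota–Baxter identity
`R̃ x ⊙ R̃ y = R̃ (R̃ x ⊙ y ⊕ x ⊙ R̃ y)`. -/
theorem weight_zero_rota_baxter {S A : Type*} [CommSemiring S] [Semiring A] [Algebra S A]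
    (hS : ∀ s : S, s + s = s) (hA : ∀ x : A, x + x = x)
    (lam : S) (R : A →ₗ[S] A)
    (hRB : ∀ x y : A, R x * R y = R (R x * y + x * R y) + lam • R (x * y)) :
    ∀ x y : A,
      (lam • x + R x) * (lam • y + R y) =
        lam • ((lam • x + R x) * y + x * (lam • y + R y))
          + R ((lam • x + R x) * y + x * (lam • y + R y)) := by
  intro x y
  simp only [add_mul, mul_add, smul_add, smul_mul_assoc, mul_smul_comm, smul_smul,
    map_add, map_smul, hRB]
  abel_nf
  simp only [two_nsmul, hA]
end

section
/- (Chen's identity) For every commutative semiring S, every d-dimensional time series z over S, every word w over the alphabet A, and all integers 0 ≤ p ≤ r ≤ q, one has ⟨ISS_{p,q}(z), w⟩ = ⊕_{uv = w} ⟨ISS_{p,r}(z), u⟩ ⊙ ⟨ISS_{r,q}(z), v⟩, where the sum ranges over all len(w)+1 ways of writing w as a concatenation w = uv of two (possibly empty) words. -/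
/-- The monomial `z^{⊙a} = (z^{(1)})^{a_1} ⊙ ⋯ ⊙ (z^{(d)})^{a_d}` associated to an
exponent vector `a ∈ ℕ^d` and `z ∈ S^d`. -/
def monom {S : Type*} [CommSemiring S] {d : ℕ} (z : Fin d → S) (a : Fin d → ℕ) : S :=
  ∏ i, z i ^ a i

/-- The iterated-sums signature coefficient
`⟨ISS_{s,t}(z), w⟩ = ⊕_{s < j_1 < ⋯ < j_k ≤ t} z_{j_1}^{⊙w_1} ⊙ ⋯ ⊙ z_{j_k}^{⊙w_k}`,
with value `1` on the empty word. -/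
def ISS {S : Type*} [CommSemiring S] {d : ℕ} (z : ℕ → Fin d → S) :
    ℕ → ℕ → List (Fin d → ℕ) → S
  | _, _, [] => 1
  | s, t, a :: w => ∑ j ∈ Finset.Ioc s t, monom (z j) a * ISS z j t w

/-- **Chen's identity.** For `0 ≤ p ≤ r ≤ q` and every word `w` over the alphabet of
nonzero exponent vectors,
`⟨ISS_{p,q}(z), w⟩ = ⊕_{uv = w} ⟨ISS_{p,r}(z), u⟩ ⊙ ⟨ISS_{r,q}(z), v⟩`,
the sum running over all `len(w) + 1` decompositions `w = uv`. -/
theorem chen_identity {S : Type*} [CommSemiring S] {d : ℕ} (z : ℕ → Fin d → S)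
    (w : List (Fin d → ℕ)) (hw : ∀ a ∈ w, a ≠ 0)
    (p r q : ℕ) (hpr : p ≤ r) (hrq : r ≤ q) :
    ISS z p q w =
      ∑ i ∈ Finset.range (w.length + 1),
        ISS z p r (w.take i) * ISS z r q (w.drop i) := by
  clear hw
  induction w generalizing p with
  | nil => simp [ISS]
  | cons a w ih =>
    have hdis : Disjoint (Finset.Ioc p r) (Finset.Ioc r q) := by
      rw [Finset.disjoint_left]
      intro j h1 h2
      simp only [Finset.mem_Ioc] at h1 h2
      omega
    have hsplit : Finset.Ioc p q = Finset.Ioc p r ∪ Finset.Ioc r q :=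
      (Finset.Ioc_union_Ioc_eq_Ioc hpr hrq).symm
    show (∑ j ∈ Finset.Ioc p q, monom (z j) a * ISS z j q w) = _
    rw [hsplit, Finset.sum_union hdis]
    have h1 : ∀ j ∈ Finset.Ioc p r, monom (z j) a * ISS z j q w
        = ∑ i ∈ Finset.range (w.length + 1),
            monom (z j) a * (ISS z j r (w.take i) * ISS z r q (w.drop i)) := by
      intro j hj
      rw [ih j (Finset.mem_Ioc.mp hj).2, Finset.mul_sum]
    rw [Finset.sum_congr rfl h1, Finset.sum_comm]
    conv_rhs => rw [List.length_cons, Finset.sum_range_succ']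
    simp only [List.take_succ_cons, List.drop_succ_cons, List.take_zero, List.drop_zero]
    show _ = (∑ i ∈ Finset.range (w.length + 1),
        (∑ j ∈ Finset.Ioc p r, monom (z j) a * ISS z j r (w.take i)) * ISS z r q (w.drop i))
        + 1 * (∑ j ∈ Finset.Ioc r q, monom (z j) a * ISS z j q w)
    rw [one_mul]
    congr 1
    apply Finset.sum_congr rfl
    intro i _
    rw [Finset.sum_mul]
    apply Finset.sum_congr rfl
    intro j _
    ring
end

section
/- (Quasi-shuffle identity) For every commutative semiring S, every d-dimensional time series z over S, all words v, w over the alphabet A, and all integers 0 ≤ s ≤ t, one has ⟨ISS_{s,t}(z), v⟩ ⊙ ⟨ISS_{s,t}(z), w⟩ = ⟨ISS_{s,t}(z), v ⋆ w⟩, where ⟨ISS_{s,t}(z), ·⟩ is extended S-linearly from words to S-linear combinations of words and ⋆ is the quasi-shuffle product. -/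
/-- The quasi-shuffle product of two words over the alphabet `ℕ^d` (with the commutative
bracket `[a b] := a + b`, the componentwise sum of exponent vectors), given as the
multiset of words appearing (with multiplicity) in the expansion of `u ⋆ v`:
`ε ⋆ v = v`, `u ⋆ ε = u`, and
`(au) ⋆ (bv) = a(u ⋆ bv) + b(au ⋆ v) + [a b](u ⋆ v)`. -/
def qsh {d : ℕ} : List (Fin d → ℕ) → List (Fin d → ℕ) → Multiset (List (Fin d → ℕ))
  | [], v => {v}
  | u, [] => {u}
  | a :: u, b :: v =>
      (qsh u (b :: v)).map (a :: ·) + (qsh (a :: u) v).map (b :: ·)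
        + (qsh u v).map ((a + b) :: ·)
termination_by u v => u.length + v.length


lemma monom_add {S : Type*} [CommSemiring S] {d : ℕ} (z : Fin d → S) (a b : Fin d → ℕ) :
    monom z (a + b) = monom z a * monom z b := by
  simp [monom, Pi.add_apply, pow_add, Finset.prod_mul_distrib]

lemma tri_comm {M : Type*} [AddCommMonoid M] (s t : ℕ) (f : ℕ → ℕ → M) :
    ∑ j ∈ Finset.Ioc s t, ∑ k ∈ Finset.Ioo s j, f j k
      = ∑ k ∈ Finset.Ioc s t, ∑ j ∈ Finset.Ioc k t, f j k := by
  rw [Finset.sum_sigma', Finset.sum_sigma']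
  refine Finset.sum_nbij' (fun x ↦ ⟨x.2, x.1⟩) (fun x ↦ ⟨x.2, x.1⟩) ?_ ?_
    (fun _ _ ↦ rfl) (fun _ _ ↦ rfl) (fun _ _ ↦ rfl) <;>
  simp only [Finset.mem_Ioc, Finset.mem_Ioo, Sigma.forall, Finset.mem_sigma] <;>
  rintro a b ⟨⟨h₁, h₂⟩, ⟨h₃, h₄⟩⟩ <;> omega

lemma square_split {M : Type*} [AddCommMonoid M] (s t : ℕ) (F : ℕ → ℕ → M) :
    ∑ j ∈ Finset.Ioc s t, ∑ k ∈ Finset.Ioc s t, F j k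
      = (∑ j ∈ Finset.Ioc s t, ∑ k ∈ Finset.Ioc j t, F j k)
        + (∑ j ∈ Finset.Ioc s t, ∑ k ∈ Finset.Ioc j t, F k j)
        + ∑ j ∈ Finset.Ioc s t, F j j := by
  have h1 : ∀ j ∈ Finset.Ioc s t,
      ∑ k ∈ Finset.Ioc s t, F j k
        = (∑ k ∈ Finset.Ioo s j, F j k) + F j j + ∑ k ∈ Finset.Ioc j t, F j k := by
    intro j hj
    simp only [Finset.mem_Ioc] at hj
    rw [← Finset.sum_Ioc_consecutive _ (le_of_lt hj.1) hj.2,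
      ← Finset.Ioo_insert_right hj.1, Finset.sum_insert (by simp)]
    rw [add_comm (F j j)]
  rw [Finset.sum_congr rfl h1]
  rw [Finset.sum_add_distrib, Finset.sum_add_distrib, tri_comm]
  abel

lemma cons_sum {S : Type*} [CommSemiring S] {d : ℕ} (z : ℕ → Fin d → S)
    (a : Fin d → ℕ) (m : Multiset (List (Fin d → ℕ))) (s t : ℕ) :
    ((m.map (a :: ·)).map (ISS z s t)).sum
      = ∑ j ∈ Finset.Ioc s t, monom (z j) a * ((m.map (ISS z j t)).sum) := by
  induction m using Multiset.induction with
  | empty => simp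
  | cons x m ih =>
      simp only [Multiset.map_cons, Multiset.sum_cons, ih, ISS, mul_add]
      rw [← Finset.sum_add_distrib]

/-- **Quasi-shuffle identity.** For every commutative semiring `S`, every `d`-dimensional
time series `z` over `S`, all words `v, w` over the alphabet of nonzero exponent vectors,
and all `0 ≤ s ≤ t`:
`⟨ISS_{s,t}(z), v⟩ ⊙ ⟨ISS_{s,t}(z), w⟩ = ⟨ISS_{s,t}(z), v ⋆ w⟩`,
where `⟨ISS_{s,t}(z), ·⟩` is extended linearly to the quasi-shuffle product `v ⋆ w`. -/
theorem quasi_shuffle_identity {S : Type*} [CommSemiring S] {d : ℕ} (z : ℕ → Fin d → S)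
    (v w : List (Fin d → ℕ)) (hv : ∀ a ∈ v, a ≠ 0) (hw : ∀ a ∈ w, a ≠ 0)
    (s t : ℕ) (hst : s ≤ t) :
    ISS z s t v * ISS z s t w = ((qsh v w).map (ISS z s t)).sum := by
  clear hv hw hst
  suffices H : ∀ n (v w : List (Fin d → ℕ)), v.length + w.length ≤ n → ∀ s,
      ISS z s t v * ISS z s t w = ((qsh v w).map (ISS z s t)).sum from
    H (v.length + w.length) v w le_rfl s
  intro n
  induction n with
  | zero =>
      intro v w h s
      obtain ⟨rfl, rfl⟩ : v = [] ∧ w = [] := by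
        constructor <;> [exact List.length_eq_zero_iff.mp (by omega);
          exact List.length_eq_zero_iff.mp (by omega)]
      simp [ISS, qsh]
  | succ n IH =>
      intro v w h s
      match v, w with
      | [], w => simp [ISS, qsh]
      | a :: u, [] => simp [ISS, qsh]
      | a :: u, b :: v =>
        simp only [List.length_cons] at h
        show (∑ j ∈ Finset.Ioc s t, monom (z j) a * ISS z j t u)
            * (∑ k ∈ Finset.Ioc s t, monom (z k) b * ISS z k t v) = _
        rw [Finset.sum_mul_sum, square_split]
        rw [qsh]
        simp only [Multiset.map_add, Multiset.sum_add]
        congr 2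
        · rw [cons_sum]
          refine Finset.sum_congr rfl fun j hj => ?_
          rw [← IH u (b :: v) (by simpa using by omega) j]
          show _ = monom (z j) a * (ISS z j t u *
            ∑ k ∈ Finset.Ioc j t, monom (z k) b * ISS z k t v)
          rw [Finset.mul_sum, Finset.mul_sum]
          exact Finset.sum_congr rfl fun k _ => by ring
        · rw [cons_sum]
          refine Finset.sum_congr rfl fun j hj => ?_
          rw [← IH (a :: u) v (by simpa using by omega) j]
          show _ = monom (z j) b * ((∑ k ∈ Finset.Ioc j t,
            monom (z k) a * ISS z k t u) * ISS z j t v)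
          rw [Finset.sum_mul, Finset.mul_sum]
          exact Finset.sum_congr rfl fun k _ => by ring
        · rw [cons_sum]
          refine Finset.sum_congr rfl fun j hj => ?_
          rw [← IH u v (by omega) j, monom_add]
          ring
end

section
/- (Quasi-shuffle identity via surjections) Let u = a_1⋯a_{k_1} and v = a_{k_1+1}⋯a_{k_1+k_2} be words over the alphabet A. For every commutative semiring S, every d-dimensional time series z over S, and all integers 0 ≤ s ≤ t, one has ⟨ISS_{s,t}(z), u⟩ ⊙ ⟨ISS_{s,t}(z), v⟩ = ⊕_{k = max(k_1,k_2)}^{k_1+k_2} ⊕_{f ∈ qSh(k_1,k_2;k)} ⟨ISS_{s,t}(z), b^f_1 ⋯ b^f_k⟩, where b^f_l := Σ_{m ∈ f^{-1}({l})} a_m is the componentwise sum of the exponent vectors of the letters mapped to l. -/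
/-- A `(k₁,k₂)`-quasi-shuffle of type `k`: a surjection `f : {1,…,k₁+k₂} ↠ {1,…,k}`
which is strictly increasing on the first `k₁` indices and on the last `k₂` indices. -/
def IsQuasiShuffle (k₁ k₂ k : ℕ) (f : Fin (k₁ + k₂) → Fin k) : Prop :=
  Function.Surjective f ∧
    (∀ i j : Fin (k₁ + k₂), (i : ℕ) < j → (j : ℕ) < k₁ → f i < f j) ∧
    (∀ i j : Fin (k₁ + k₂), k₁ ≤ (i : ℕ) → (i : ℕ) < j → f i < f j)

/-!
Expanding both coefficients, the product becomes a sum over pairs of strictly increasing index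
tuples in `(s, t]`, i.e. over tuples `g` on `{1, …, k₁ + k₂}` that increase on each of the two
blocks. Such a `g` factors uniquely as `h ∘ f` with `f` a surjection onto `{1, …, k}`,
`k = #range g`, and `h` strictly increasing; `f` is then exactly a quasi-shuffle, and collecting
the factors `z_{h l}^{⊙ a_m}` with `f m = l` yields `z_{h l}^{⊙ b^f_l}`.
-/

open Finset Function

section Tuples

variable {α : Type*} [Preorder α]

open scoped Classical in
noncomputable def strictMonoTuples (k : ℕ) (T : Finset α) : Finset (Fin k → α) :=
  {g ∈ Fintype.piFinset fun _ => T | StrictMono g}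

open scoped Classical in
noncomputable def blockStrictMonoTuples (k₁ k₂ : ℕ) (T : Finset α) :
    Finset (Fin (k₁ + k₂) → α) :=
  {g ∈ Fintype.piFinset fun _ => T |
    StrictMono (g ∘ Fin.castAdd k₂) ∧ StrictMono (g ∘ Fin.natAdd k₁)}

lemma mem_strictMonoTuples {k : ℕ} {T : Finset α} {g : Fin k → α} :
    g ∈ strictMonoTuples k T ↔ (∀ i, g i ∈ T) ∧ StrictMono g := by
  simp [strictMonoTuples]

lemma mem_blockStrictMonoTuples {k₁ k₂ : ℕ} {T : Finset α} {g : Fin (k₁ + k₂) → α} :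
    g ∈ blockStrictMonoTuples k₁ k₂ T ↔
      (∀ i, g i ∈ T) ∧ StrictMono (g ∘ Fin.castAdd k₂) ∧ StrictMono (g ∘ Fin.natAdd k₁) := by
  simp [blockStrictMonoTuples]

lemma sum_strictMonoTuples_succ [LocallyFiniteOrder α] {M : Type*} [AddCommMonoid M]
    (k : ℕ) (s t : α) (F : (Fin (k + 1) → α) → M) :
    ∑ g ∈ strictMonoTuples (k + 1) (Ioc s t), F g =
      ∑ j ∈ Ioc s t, ∑ g ∈ strictMonoTuples k (Ioc j t), F (Fin.cons j g) := by
  rw [sum_sigma']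
  refine (sum_nbij' (fun x : (_ : α) × (Fin k → α) => (Fin.cons x.1 x.2 : Fin (k + 1) → α))
    (fun g => ⟨g 0, Fin.tail g⟩)
    ?_ ?_ (fun _ _ => rfl) (fun g _ => Fin.cons_self_tail g) (fun _ _ => rfl)).symm
  · rintro ⟨j, g⟩
    simp only [mem_sigma, mem_strictMonoTuples, mem_Ioc,
      Fin.forall_fin_succ, Fin.cons_zero, Fin.cons_succ, Fin.strictMono_cons]
    rintro ⟨hj, hg, hmono⟩
    exact ⟨⟨hj, fun i => ⟨hj.1.trans (hg i).1, (hg i).2⟩⟩, fun i => (hg i).1, hmono⟩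
  · intro g
    simp only [mem_sigma, mem_strictMonoTuples, mem_Ioc,
      Fin.forall_fin_succ]
    rintro ⟨⟨h0, hg⟩, hmono⟩
    exact ⟨h0, fun i => ⟨hmono (Fin.succ_pos i), (hg i).2⟩,
      hmono.comp fun _ _ => Fin.succ_lt_succ_iff.mpr⟩

lemma sum_strictMonoTuples_mul_sum {R : Type*} [CommSemiring R] (k₁ k₂ : ℕ) (T : Finset α)
    (F₁ : (Fin k₁ → α) → R) (F₂ : (Fin k₂ → α) → R) :
    (∑ g ∈ strictMonoTuples k₁ T, F₁ g) * (∑ g ∈ strictMonoTuples k₂ T, F₂ g) =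
      ∑ g ∈ blockStrictMonoTuples k₁ k₂ T,
        F₁ (g ∘ Fin.castAdd k₂) * F₂ (g ∘ Fin.natAdd k₁) := by
  have append_comp_castAdd (g₁ : Fin k₁ → α) (g₂ : Fin k₂ → α) :
      Fin.append g₁ g₂ ∘ Fin.castAdd k₂ = g₁ := funext (Fin.append_left g₁ g₂)
  have append_comp_natAdd (g₁ : Fin k₁ → α) (g₂ : Fin k₂ → α) :
      Fin.append g₁ g₂ ∘ Fin.natAdd k₁ = g₂ := funext (Fin.append_right g₁ g₂)
  rw [sum_mul_sum, ← sum_product']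
  refine sum_nbij' (fun p => Fin.append p.1 p.2) (fun g => (g ∘ Fin.castAdd k₂, g ∘ Fin.natAdd k₁))
    ?_ ?_ (fun _ _ => by simp only [append_comp_castAdd, append_comp_natAdd])
    (fun g _ => Fin.append_castAdd_natAdd)
    (fun _ _ => by simp only [append_comp_castAdd, append_comp_natAdd])
  · rintro ⟨g₁, g₂⟩
    simp only [mem_product, mem_strictMonoTuples, mem_blockStrictMonoTuples,
      append_comp_castAdd, append_comp_natAdd]
    rintro ⟨⟨hT₁, hg₁⟩, hT₂, hg₂⟩
    exact ⟨Fin.addCases (by simpa using hT₁) (by simpa using hT₂), hg₁, hg₂⟩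
  · intro g
    simp only [mem_product, mem_strictMonoTuples, mem_blockStrictMonoTuples]
    rintro ⟨hT, hg₁, hg₂⟩
    exact ⟨⟨fun i => hT _, hg₁⟩, fun i => hT _, hg₂⟩

end Tuples

section Factorization

variable {α : Type*}

lemma StrictMono.strictMono_comp_iff {β γ : Type*} [Preorder α] [LinearOrder β] [Preorder γ]
    {h : β → α} (hh : StrictMono h) {φ : γ → β} : StrictMono (h ∘ φ) ↔ StrictMono φ :=
  ⟨fun H _ _ hab => hh.lt_iff_lt.mp (H hab), hh.comp⟩

lemma injOn_comp_surjective_strictMono [Preorder α] {ι : Type*} {k : ℕ} :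
    Set.InjOn (fun p : (ι → Fin k) × (Fin k → α) => p.2 ∘ p.1)
      {p | Surjective p.1 ∧ StrictMono p.2} := by
  rintro ⟨f, h⟩ ⟨hf, hh⟩ ⟨f', h'⟩ ⟨hf', hh'⟩ (he : h ∘ f = h' ∘ f')
  have hh_eq : h = h' := by
    rw [← hh.range_inj hh', ← hf.range_comp, he, hf'.range_comp]
  subst hh_eq
  exact Prod.ext (funext fun m => hh.injective (congrFun he m)) rfl

lemma card_image_comp_surjective_injective [DecidableEq α] {ι : Type*} [Fintype ι] {k : ℕ}
    {f : ι → Fin k} {h : Fin k → α} (hf : Surjective f) (hh : Injective h) :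
    #(univ.image (h ∘ f)) = k := by
  rw [← image_image, image_univ_of_surjective hf, card_image_of_injective _ hh, card_fin]

lemma exists_surjective_strictMono_comp_eq [LinearOrder α] {ι : Type*} [Fintype ι] {k : ℕ}
    (g : ι → α) (hk : #(univ.image g) = k) :
    ∃ f : ι → Fin k, ∃ h : Fin k → α, Surjective f ∧ StrictMono h ∧ h ∘ f = g := by
  set e := (univ.image g).orderIsoOfFin hk
  have hg_mem (m : ι) : g m ∈ univ.image g := mem_image_of_mem g (mem_univ m)
  refine ⟨fun m => e.symm ⟨g m, hg_mem m⟩, fun l => e l, ?_, ?_, ?_⟩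
  · intro l
    obtain ⟨m, -, hm⟩ := mem_image.mp (e l).2
    exact ⟨m, e.symm_apply_eq.mpr (Subtype.ext hm)⟩
  · exact fun _ _ hab => e.strictMono hab
  · funext m
    simp

end Factorization

lemma isQuasiShuffle_iff {k₁ k₂ k : ℕ} {f : Fin (k₁ + k₂) → Fin k} :
    IsQuasiShuffle k₁ k₂ k f ↔
      Surjective f ∧ StrictMono (f ∘ Fin.castAdd k₂) ∧ StrictMono (f ∘ Fin.natAdd k₁) := by
  refine and_congr_right fun _ => and_congr ⟨fun H a b hab => H _ _ hab b.isLt, ?_⟩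
    ⟨fun H a b hab => H _ _ (Nat.le_add_right k₁ a) (Nat.add_lt_add_left hab k₁), ?_⟩
  · intro H i j hij hj
    exact H (show (⟨i, hij.trans hj⟩ : Fin k₁) < ⟨j, hj⟩ from hij)
  · intro H i j hi hij
    obtain ⟨a, rfl⟩ : ∃ a : Fin k₂, Fin.natAdd k₁ a = i :=
      ⟨⟨i - k₁, by omega⟩, Fin.ext (show k₁ + (i - k₁) = (i : ℕ) by omega)⟩
    obtain ⟨b, rfl⟩ : ∃ b : Fin k₂, Fin.natAdd k₁ b = j :=
      ⟨⟨j - k₁, by omega⟩, Fin.ext (show k₁ + (j - k₁) = (j : ℕ) by omega)⟩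
    exact H (by simpa using hij)

section Reindexing

variable {α : Type*} [LinearOrder α] {k₁ k₂ : ℕ} {T : Finset α} {M : Type*} [AddCommMonoid M]

lemma card_image_mem_Icc_of_mem_blockStrictMonoTuples {g : Fin (k₁ + k₂) → α}
    (hg : g ∈ blockStrictMonoTuples k₁ k₂ T) :
    #(univ.image g) ∈ Icc (max k₁ k₂) (k₁ + k₂) := by
  obtain ⟨-, hg₁, hg₂⟩ := mem_blockStrictMonoTuples.mp hg
  have hmaps {ι : Type} [Fintype ι] (φ : ι → Fin (k₁ + k₂)) :
      Set.MapsTo (g ∘ φ) (univ : Finset ι) (univ.image g) :=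
    fun i _ => mem_image_of_mem g (mem_univ (φ i))
  have hk₁ := card_le_card_of_injOn _ (hmaps (Fin.castAdd k₂)) hg₁.injective.injOn
  have hk₂ := card_le_card_of_injOn _ (hmaps (Fin.natAdd k₁)) hg₂.injective.injOn
  simp only [card_univ, Fintype.card_fin] at hk₁ hk₂
  exact mem_Icc.mpr ⟨max_le hk₁ hk₂, card_image_le.trans (by simp)⟩

open scoped Classical in
lemma sum_quasiShuffle_sum_strictMonoTuples (k : ℕ) (F : (Fin (k₁ + k₂) → α) → M) :
    ∑ f ∈ univ.filter (fun f : Fin (k₁ + k₂) → Fin k => IsQuasiShuffle k₁ k₂ k f),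
        ∑ h ∈ strictMonoTuples k T, F (h ∘ f) =
      ∑ g ∈ blockStrictMonoTuples k₁ k₂ T with #(univ.image g) = k, F g := by
  rw [← sum_product']
  refine sum_nbij (fun p => p.2 ∘ p.1) ?_ ?_ ?_ (fun _ _ => rfl)
  · rintro ⟨f, h⟩
    simp only [mem_product, mem_filter, mem_univ, true_and, isQuasiShuffle_iff,
      mem_strictMonoTuples, mem_blockStrictMonoTuples]
    rintro ⟨⟨hf, hf₁, hf₂⟩, hT, hh⟩
    exact ⟨⟨fun m => hT _, hh.comp hf₁, hh.comp hf₂⟩,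
      card_image_comp_surjective_injective hf hh.injective⟩
  · refine injOn_comp_surjective_strictMono.mono fun p hp => ?_
    simp only [coe_product, Set.mem_prod, mem_coe, mem_filter, isQuasiShuffle_iff,
      mem_strictMonoTuples] at hp
    exact ⟨hp.1.2.1, hp.2.2⟩
  · intro g hg
    simp only [coe_filter, Set.mem_ofPred_eq, mem_blockStrictMonoTuples] at hg
    obtain ⟨⟨hT, hg₁, hg₂⟩, hk⟩ := hg
    obtain ⟨f, h, hf, hh, rfl⟩ := exists_surjective_strictMono_comp_eq g hk
    refine ⟨(f, h), ?_, rfl⟩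
    simp only [coe_product, Set.mem_prod, mem_coe, mem_filter, mem_univ, true_and,
      isQuasiShuffle_iff, mem_strictMonoTuples]
    refine ⟨⟨hf, hh.strictMono_comp_iff.mp hg₁, hh.strictMono_comp_iff.mp hg₂⟩, ?_, hh⟩
    intro l
    obtain ⟨m, rfl⟩ := hf l
    exact hT m

open scoped Classical in
lemma sum_blockStrictMonoTuples_eq_sum_quasiShuffle (F : (Fin (k₁ + k₂) → α) → M) :
    ∑ g ∈ blockStrictMonoTuples k₁ k₂ T, F g =
      ∑ k ∈ Icc (max k₁ k₂) (k₁ + k₂),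
        ∑ f ∈ univ.filter (fun f : Fin (k₁ + k₂) → Fin k => IsQuasiShuffle k₁ k₂ k f),
          ∑ h ∈ strictMonoTuples k T, F (h ∘ f) := by
  rw [← sum_fiberwise_of_maps_to fun _ => card_image_mem_Icc_of_mem_blockStrictMonoTuples]
  exact sum_congr rfl fun k _ => (sum_quasiShuffle_sum_strictMonoTuples k F).symm

end Reindexing

section Signature

variable {S : Type*} [CommSemiring S] {d : ℕ}

lemma monom_sum (x : Fin d → S) {ι : Type*} (s : Finset ι) (a : ι → Fin d → ℕ) :
    monom x (∑ m ∈ s, a m) = ∏ m ∈ s, monom x (a m) := by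
  simp only [monom, Finset.sum_apply, ← prod_pow_eq_pow_sum]
  exact prod_comm

lemma ISS_ofFn_eq_sum (z : ℕ → Fin d → S) (s t : ℕ) {k : ℕ} (w : Fin k → Fin d → ℕ) :
    ISS z s t (List.ofFn w) = ∑ g ∈ strictMonoTuples k (Ioc s t), ∏ i, monom (z (g i)) (w i) := by
  induction k generalizing s with
  | zero =>
    have : strictMonoTuples 0 (Ioc s t) = {Fin.elim0} := by
      ext g
      simp [mem_strictMonoTuples, Subsingleton.strictMono, Subsingleton.elim g Fin.elim0]
    simp [ISS, this]
  | succ k ih =>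
    simp only [List.ofFn_succ, ISS, ih, mul_sum, sum_strictMonoTuples_succ, Fin.prod_univ_succ,
      Fin.cons_zero, Fin.cons_succ]

lemma ISS_mul_ISS_eq_sum (z : ℕ → Fin d → S) {k₁ k₂ : ℕ} (u : Fin k₁ → Fin d → ℕ)
    (v : Fin k₂ → Fin d → ℕ) (s t : ℕ) :
    ISS z s t (List.ofFn u) * ISS z s t (List.ofFn v) =
      ∑ g ∈ blockStrictMonoTuples k₁ k₂ (Ioc s t), ∏ m, monom (z (g m)) (Fin.append u v m) := by
  simp only [ISS_ofFn_eq_sum, sum_strictMonoTuples_mul_sum, Fin.prod_univ_add, comp_apply,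
    Fin.append_left, Fin.append_right]

lemma ISS_ofFn_sum_fiber (z : ℕ → Fin d → S) {n k : ℕ} (f : Fin n → Fin k)
    (a : Fin n → Fin d → ℕ) (s t : ℕ) :
    ISS z s t (List.ofFn fun l => ∑ m ∈ univ.filter (fun m => f m = l), a m) =
      ∑ h ∈ strictMonoTuples k (Ioc s t), ∏ m, monom (z (h (f m))) (a m) := by
  rw [ISS_ofFn_eq_sum]
  refine sum_congr rfl fun h _ => ?_
  simp only [monom_sum]
  rw [← prod_fiberwise univ f]
  refine prod_congr rfl fun l _ => prod_congr rfl fun m hm => ?_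
  rw [(mem_filter.mp hm).2]

end Signature

open scoped Classical in
theorem quasi_shuffle_via_surjections_general {S : Type*} [CommSemiring S] {d : ℕ}
    (z : ℕ → Fin d → S) (k₁ k₂ : ℕ)
    (u : Fin k₁ → Fin d → ℕ) (v : Fin k₂ → Fin d → ℕ)
    (s t : ℕ) :
    ISS z s t (List.ofFn u) * ISS z s t (List.ofFn v) =
      ∑ k ∈ Finset.Icc (max k₁ k₂) (k₁ + k₂),
        ∑ f ∈ Finset.univ.filter (fun f : Fin (k₁ + k₂) → Fin k => IsQuasiShuffle k₁ k₂ k f),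
          ISS z s t
            (List.ofFn fun l : Fin k =>
              ∑ m ∈ Finset.univ.filter (fun m => f m = l), Fin.append u v m) := by
  rw [ISS_mul_ISS_eq_sum, sum_blockStrictMonoTuples_eq_sum_quasiShuffle]
  exact sum_congr rfl fun k _ => sum_congr rfl fun f _ => (ISS_ofFn_sum_fiber z f _ s t).symm

open scoped Classical in
/-- **Quasi-shuffle identity via surjections.** For words `u = a_1⋯a_{k₁}` and
`v = a_{k₁+1}⋯a_{k₁+k₂}` over the alphabet of nonzero exponent vectors,
`⟨ISS_{s,t}(z), u⟩ ⊙ ⟨ISS_{s,t}(z), v⟩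
  = ⊕_{k = max(k₁,k₂)}^{k₁+k₂} ⊕_{f ∈ qSh(k₁,k₂;k)} ⟨ISS_{s,t}(z), b^f_1 ⋯ b^f_k⟩`,
where `b^f_l = Σ_{m ∈ f⁻¹({l})} a_m` (componentwise sum of exponent vectors). -/
theorem quasi_shuffle_via_surjections {S : Type*} [CommSemiring S] {d : ℕ}
    (z : ℕ → Fin d → S) (k₁ k₂ : ℕ) (hk₁ : 0 < k₁) (hk₂ : 0 < k₂)
    (u : Fin k₁ → Fin d → ℕ) (v : Fin k₂ → Fin d → ℕ)
    (hu : ∀ i, u i ≠ 0) (hv : ∀ i, v i ≠ 0)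
    (s t : ℕ) (hst : s ≤ t) :
    ISS z s t (List.ofFn u) * ISS z s t (List.ofFn v) =
      ∑ k ∈ Finset.Icc (max k₁ k₂) (k₁ + k₂),
        ∑ f ∈ Finset.univ.filter (fun f : Fin (k₁ + k₂) → Fin k => IsQuasiShuffle k₁ k₂ k f),
          ISS z s t
            (List.ofFn fun l : Fin k =>
              ∑ m ∈ Finset.univ.filter (fun m => f m = l), Fin.append u v m) :=
  quasi_shuffle_via_surjections_general z k₁ k₂ u v s t
end

section
/- Let S be a commutative semiring with the cancellation property (a ⊙ c = b ⊙ c and c ≠ 0_S imply a = b). If z and z' are eventually-zero d-dimensional time series over S such that ⟨ISS_{0,∞}(z), w⟩ = ⟨ISS_{0,∞}(z'), w⟩ for every word w over the alphabet A, then the compressions of z and z' coincide: ž = ž'. -/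
open scoped Classical in
/-- The compression `ž` of an eventually-zero time series `z = (z_1, z_2, …)`
vanishing beyond time `N`: the list of entries `z_1, …, z_N` with all zero
entries deleted. -/
noncomputable def compress {S : Type*} [CommSemiring S] {d : ℕ}
    (z : ℕ → Fin d → S) (N : ℕ) : List (Fin d → S) :=
  ((List.range' 1 N).map z).filter (fun x => decide (x ≠ 0))

section

variable {S : Type*} [CommSemiring S] {d : ℕ}

theorem monom_zero {a : Fin d → ℕ} (ha : a ≠ 0) : monom (0 : Fin d → S) a = 0 := by
  obtain ⟨i, hi⟩ := Function.ne_iff.mp ha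
  exact Finset.prod_eq_zero (Finset.mem_univ i) (zero_pow hi)

theorem monom_single (x : Fin d → S) (i : Fin d) (k : ℕ) :
    monom x (Pi.single i k) = x i ^ k := by
  rw [monom, Finset.prod_eq_single i (fun j _ hj => by simp [Pi.single_eq_of_ne hj]) (by simp)]
  simp

theorem exists_monom_ne_zero {x : Fin d → S} (hx : x ≠ 0) : ∃ a ≠ 0, monom x a ≠ 0 := by
  obtain ⟨i, hi⟩ := Function.ne_iff.mp hx
  exact ⟨Pi.single i 1, by simp, by simpa [monom_single] using hi⟩

theorem ISS_cons_of_lt (z : ℕ → Fin d → S) {s t : ℕ} (h : s < t) (a : Fin d → ℕ)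
    (w : List (Fin d → ℕ)) :
    ISS z s t (a :: w) = monom (z (s + 1)) a * ISS z (s + 1) t w + ISS z (s + 1) t (a :: w) := by
  have hIoc : Finset.Ioc s t = insert (s + 1) (Finset.Ioc (s + 1) t) := by
    ext j; simp only [Finset.mem_Ioc, Finset.mem_insert]; omega
  rw [ISS, hIoc, Finset.sum_insert (by simp)]
  rfl

def listISS : List (Fin d → S) → List (Fin d → ℕ) → S
  | _, [] => 1
  | [], _ :: _ => 0
  | x :: l, a :: w => monom x a * listISS l w + listISS l (a :: w)

@[simp]
theorem listISS_nil_right (l : List (Fin d → S)) : listISS l [] = 1 := by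
  cases l <;> rfl

theorem ISS_eq_listISS (z : ℕ → Fin d → S) (s n : ℕ) (w : List (Fin d → ℕ)) :
    ISS z s (s + n) w = listISS ((List.range' (s + 1) n).map z) w := by
  induction n generalizing s w with
  | zero =>
    cases w with
    | nil => rfl
    | cons a w => simp [ISS, listISS]
  | succ n ih =>
    cases w with
    | nil => rfl
    | cons a w =>
      rw [ISS_cons_of_lt z (by omega), show s + (n + 1) = s + 1 + n by omega, ih, ih]
      rfl

theorem listISS_eq_zero_of_length_lt {l : List (Fin d → S)} {w : List (Fin d → ℕ)}
    (h : l.length < w.length) : listISS l w = 0 := by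
  induction l generalizing w with
  | nil =>
    cases w with
    | nil => simp at h
    | cons a w => rfl
  | cons x l ih =>
    cases w with
    | nil => simp at h
    | cons a w =>
      simp only [List.length_cons] at h
      rw [listISS, ih (by omega), ih (by simp; omega), mul_zero, add_zero]

theorem listISS_eq_prod_zipWith {l : List (Fin d → S)} {w : List (Fin d → ℕ)}
    (h : l.length = w.length) : listISS l w = (List.zipWith monom l w).prod := by
  induction l generalizing w with
  | nil =>
    cases w with
    | nil => simp
    | cons a w => simp at h
  | cons x l ih =>
    cases w with
    | nil => simp at h
    | cons a w =>
      simp only [List.length_cons, add_left_inj] at h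
      rw [listISS, ih h, listISS_eq_zero_of_length_lt (by simp [h]), add_zero]
      simp

theorem listISS_filter {p : (Fin d → S) → Bool} (hp : ∀ x, p x = false → x = 0)
    (l : List (Fin d → S)) {w : List (Fin d → ℕ)} (hw : ∀ a ∈ w, a ≠ 0) :
    listISS (l.filter p) w = listISS l w := by
  induction l generalizing w with
  | nil => rfl
  | cons x l ih =>
    cases w with
    | nil => simp
    | cons a w =>
      have hw' : ∀ b ∈ w, b ≠ 0 := fun b hb => hw b (List.mem_cons_of_mem a hb)
      cases hpx : p x with
      | false =>
        rw [List.filter_cons_of_neg (by simp [hpx]), ih hw, listISS, hp x hpx,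
          monom_zero (hw a List.mem_cons_self), zero_mul, zero_add]
      | true =>
        rw [List.filter_cons_of_pos hpx, listISS, listISS, ih hw', ih hw]

theorem listISS_compress (z : ℕ → Fin d → S) (N : ℕ) {w : List (Fin d → ℕ)}
    (hw : ∀ a ∈ w, a ≠ 0) : listISS (compress z N) w = ISS z 0 N w := by
  rw [compress, listISS_filter (fun x h => by simpa using h) _ hw]
  simpa using (ISS_eq_listISS z 0 N w).symm

theorem ne_zero_of_mem_compress {z : ℕ → Fin d → S} {N : ℕ} {x : Fin d → S}
    (hx : x ∈ compress z N) : x ≠ 0 := by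
  simpa [compress] using (List.mem_filter.mp hx).2

theorem exists_word_prod_zipWith_ne_zero [NoZeroDivisors S] [Nontrivial S] :
    ∀ {l : List (Fin d → S)}, (∀ x ∈ l, x ≠ 0) →
      ∃ w : List (Fin d → ℕ), w.length = l.length ∧ (∀ a ∈ w, a ≠ 0) ∧
        (List.zipWith monom l w).prod ≠ 0
  | [], _ => ⟨[], rfl, by simp, by simp⟩
  | x :: _, hl => by
    obtain ⟨a, ha, hxa⟩ := exists_monom_ne_zero (hl x List.mem_cons_self)
    obtain ⟨w, hlen, hw, hprod⟩ :=
      exists_word_prod_zipWith_ne_zero fun y hy => hl y (List.mem_cons_of_mem x hy)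
    exact ⟨a :: w, by simp [hlen], List.forall_mem_cons.mpr ⟨ha, hw⟩,
      by simpa using mul_ne_zero hxa hprod⟩

theorem length_le_of_forall_listISS_eq [NoZeroDivisors S] [Nontrivial S]
    {u v : List (Fin d → S)} (hv : ∀ x ∈ v, x ≠ 0)
    (h : ∀ w : List (Fin d → ℕ), (∀ a ∈ w, a ≠ 0) → listISS u w = listISS v w) :
    v.length ≤ u.length := by
  obtain ⟨w, hlen, hw, hprod⟩ := exists_word_prod_zipWith_ne_zero hv
  by_contra! hlt
  rw [← listISS_eq_prod_zipWith hlen.symm, ← h w hw,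
    listISS_eq_zero_of_length_lt (hlen ▸ hlt)] at hprod
  exact hprod rfl

theorem eq_of_forall_monom_mul_eq [IsCancelMulZero S] {x y : Fin d → S} {r r' : S}
    (hr : r ≠ 0) (hr' : r' ≠ 0) (h : ∀ a ≠ 0, monom x a * r = monom y a * r') : x = y := by
  funext i
  have h1 := h (Pi.single i 1) (by simp)
  have h2 := h (Pi.single i 2) (by simp)
  simp only [monom_single, pow_one] at h1 h2
  by_cases hxr : x i * r = 0
  · have hx : x i = 0 := (mul_eq_zero.mp hxr).resolve_right hr
    rw [hx, zero_mul, eq_comm, mul_eq_zero] at h1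
    exact hx.trans (h1.resolve_right hr').symm
  · refine mul_right_cancel₀ hxr ?_
    calc x i * (x i * r) = x i ^ 2 * r := by ring
      _ = y i ^ 2 * r' := h2
      _ = y i * (y i * r') := by ring
      _ = y i * (x i * r) := by rw [h1]

theorem eq_of_forall_prod_zipWith_eq [IsDomain S] :
    ∀ {u v : List (Fin d → S)}, (∀ x ∈ u, x ≠ 0) → u.length = v.length →
      (∀ w : List (Fin d → ℕ), (∀ a ∈ w, a ≠ 0) → w.length = u.length →
        (List.zipWith monom u w).prod = (List.zipWith monom v w).prod) → u = v
  | [], [], _, _, _ => rfl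
  | [], _ :: _, _, hlen, _ | _ :: _, [], _, hlen, _ => by simp at hlen
  | x :: u, y :: v, hu, hlen, h => by
    have hx := hu x List.mem_cons_self
    have hu' : ∀ z ∈ u, z ≠ 0 := fun z hz => hu z (List.mem_cons_of_mem x hz)
    have hcons : ∀ a ≠ 0, ∀ w : List (Fin d → ℕ), (∀ b ∈ w, b ≠ 0) → w.length = u.length →
        monom x a * (List.zipWith monom u w).prod =
          monom y a * (List.zipWith monom v w).prod :=
      fun a ha w hw hwl => by
        simpa using h (a :: w) (List.forall_mem_cons.mpr ⟨ha, hw⟩) (by simp [hwl])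
    obtain ⟨w, hwl, hw, hr⟩ := exists_word_prod_zipWith_ne_zero hu'
    obtain ⟨a, ha, hxa⟩ := exists_monom_ne_zero hx
    have hr' : (List.zipWith monom v w).prod ≠ 0 :=
      right_ne_zero_of_mul (hcons a ha w hw hwl ▸ mul_ne_zero hxa hr)
    obtain rfl : x = y := eq_of_forall_monom_mul_eq hr hr' fun b hb => hcons b hb w hw hwl
    congr 1
    exact eq_of_forall_prod_zipWith_eq hu' (by simpa using hlen)
      fun w hw hwl => mul_left_cancel₀ hxa (hcons a ha w hw hwl)

theorem eq_of_forall_listISS_eq [IsDomain S] {u v : List (Fin d → S)}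
    (hu : ∀ x ∈ u, x ≠ 0) (hv : ∀ x ∈ v, x ≠ 0)
    (h : ∀ w : List (Fin d → ℕ), (∀ a ∈ w, a ≠ 0) → listISS u w = listISS v w) : u = v := by
  have hlen : u.length = v.length := le_antisymm
    (length_le_of_forall_listISS_eq hu fun w hw => (h w hw).symm)
    (length_le_of_forall_listISS_eq hv h)
  refine eq_of_forall_prod_zipWith_eq hu hlen fun w hw hwl => ?_
  rw [← listISS_eq_prod_zipWith hwl.symm, ← listISS_eq_prod_zipWith (hlen ▸ hwl.symm),
    h w hw]

end

theorem compress_eq_of_iss_eq_general {S : Type*} [CommSemiring S] {d : ℕ}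
    (hcancel : ∀ a b c : S, a * c = b * c → c ≠ 0 → a = b)
    (z z' : ℕ → Fin d → S) (N N' : ℕ)
    (hsig : ∀ w : List (Fin d → ℕ), (∀ a ∈ w, a ≠ 0) →
      ISS z 0 N w = ISS z' 0 N' w) :
    compress z N = compress z' N' := by
  rcases subsingleton_or_nontrivial S with hS | hS
  · have hnil (y : ℕ → Fin d → S) (M : ℕ) : compress y M = [] :=
      List.eq_nil_iff_forall_not_mem.mpr fun x hx =>
        ne_zero_of_mem_compress hx (Subsingleton.elim x 0)
    rw [hnil, hnil]
  have : IsRightCancelMulZero S := ⟨fun hc a b h => hcancel a b _ h hc⟩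
  have : IsCancelMulZero S := IsRightCancelMulZero.to_isCancelMulZero
  have : IsDomain S := {}
  refine eq_of_forall_listISS_eq (fun _ => ne_zero_of_mem_compress)
    (fun _ => ne_zero_of_mem_compress) fun w hw => ?_
  rw [listISS_compress z N hw, listISS_compress z' N' hw, hsig w hw]

/-- **Reconstruction up to compression under the cancellation property.** Let `S` be
a commutative semiring with the cancellation property (`a ⊙ c = b ⊙ c` and `c ≠ 0`
imply `a = b`). If the eventually-zero time series `z` (vanishing beyond `N`) and
`z'` (vanishing beyond `N'`) have the same iterated-sums signature
`⟨ISS_{0,∞}(z), w⟩ = ⟨ISS_{0,∞}(z'), w⟩` for every word `w` over the alphabet of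
nonzero exponent vectors, then their compressions coincide: `ž = ž'`. -/
theorem compress_eq_of_iss_eq {S : Type*} [CommSemiring S] {d : ℕ}
    (hcancel : ∀ a b c : S, a * c = b * c → c ≠ 0 → a = b)
    (z z' : ℕ → Fin d → S) (N N' : ℕ)
    (hz : ∀ i, N < i → z i = 0) (hz' : ∀ i, N' < i → z' i = 0)
    (hsig : ∀ w : List (Fin d → ℕ), (∀ a ∈ w, a ≠ 0) →
      ISS z 0 N w = ISS z' 0 N' w) :
    compress z N = compress z' N' :=
  compress_eq_of_iss_eq_general hcancel z z' N N' hsig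
end

section
/- Let S be a commutative semiring and d ≥ 1. Suppose that for all eventually-zero d-dimensional time series z and z' over S, the equality ⟨ISS_{0,∞}(z), w⟩ = ⟨ISS_{0,∞}(z'), w⟩ for every word w over the alphabet A implies ž = ž'. Then S is zero-divisor free, i.e. a ⊙ b = 0_S implies a = 0_S or b = 0_S. -/
section
variable {S : Type*} [CommSemiring S] {d : ℕ}

lemma monom_const (c : S) (α : Fin d → ℕ) :
    monom (fun _ : Fin d => c) α = c ^ (∑ i, α i) := by
  simp [monom, Finset.prod_pow_eq_pow_sum]

lemma ISS_self (zz : ℕ → Fin d → S) (t : ℕ) (α : Fin d → ℕ) (w : List (Fin d → ℕ)) :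
    ISS zz t t (α :: w) = 0 := by
  simp [ISS]

lemma sum_pos_of_ne_zero {α : Fin d → ℕ} (hα : α ≠ 0) : 1 ≤ ∑ i, α i := by
  rcases Nat.eq_zero_or_pos (∑ i, α i) with h | h
  · exact absurd (funext fun i => (Finset.sum_eq_zero_iff.mp h) i (Finset.mem_univ i)) hα
  · exact h

end


/-- **Necessity of zero-divisor freeness.** Let `S` be a commutative semiring and
`d ≥ 1`. If for all eventually-zero `d`-dimensional time series `z, z'` the equality
of the signatures `⟨ISS_{0,∞}(z), w⟩ = ⟨ISS_{0,∞}(z'), w⟩` for all words `w` over the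
alphabet of nonzero exponent vectors implies `ž = ž'`, then `S` is zero-divisor free:
`a ⊙ b = 0` implies `a = 0` or `b = 0`. -/
theorem zero_divisor_free_of_iss_separates {S : Type*} [CommSemiring S] {d : ℕ}
    (hd : 0 < d)
    (hsep : ∀ (z z' : ℕ → Fin d → S) (N N' : ℕ),
      (∀ i, N < i → z i = 0) → (∀ i, N' < i → z' i = 0) →
      (∀ w : List (Fin d → ℕ), (∀ a ∈ w, a ≠ 0) → ISS z 0 N w = ISS z' 0 N' w) →
      compress z N = compress z' N') :
    ∀ a b : S, a * b = 0 → a = 0 ∨ b = 0 := by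
  intro a b hab
  by_contra hcon
  push_neg at hcon
  obtain ⟨ha, hb⟩ := hcon
  -- cross terms vanish
  have hcross : ∀ m n : ℕ, 1 ≤ m → 1 ≤ n → a ^ m * b ^ n = 0 := by
    intro m n hm hn
    obtain ⟨m', rfl⟩ := Nat.exists_eq_add_of_le hm
    obtain ⟨n', rfl⟩ := Nat.exists_eq_add_of_le hn
    calc a ^ (1 + m') * b ^ (1 + n')
        = (a * b) * (a ^ m' * b ^ n') := by ring
      _ = 0 := by rw [hab, zero_mul]
  have hpow : ∀ k : ℕ, 1 ≤ k → (a + b) ^ k = a ^ k + b ^ k := by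
    intro k hk
    induction k with
    | zero => omega
    | succ n ih =>
      rcases Nat.eq_zero_or_pos n with rfl | hn
      · simp
      · have := ih hn
        calc (a + b) ^ (n + 1) = (a + b) ^ n * (a + b) := by ring
          _ = (a ^ n + b ^ n) * (a + b) := by rw [this]
          _ = a ^ (n+1) + b ^ (n+1) + (a ^ n * b ^ 1 + a ^ 1 * b ^ n) := by ring
          _ = a ^ (n+1) + b ^ (n+1) := by
              rw [hcross n 1 hn le_rfl, hcross 1 n le_rfl hn]; ring
  set z : ℕ → Fin d → S := fun i =>
    if i = 1 then (fun _ => a) else if i = 2 then (fun _ => b) else 0 with hz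
  set z' : ℕ → Fin d → S := fun i =>
    if i = 1 then (fun _ => a + b) else 0 with hz'
  have hz1 : z 1 = fun _ => a := by simp [hz]
  have hz2 : z 2 = fun _ => b := by simp [hz]
  have hz'1 : z' 1 = fun _ => a + b := by simp [hz']
  have hN : ∀ i, 2 < i → z i = 0 := by
    intro i hi; simp only [hz]
    rw [if_neg (by omega), if_neg (by omega)]
  have hN' : ∀ i, 1 < i → z' i = 0 := by
    intro i hi; simp only [hz']; rw [if_neg (by omega)]
  have hIoc02 : Finset.Ioc 0 2 = ({1, 2} : Finset ℕ) := by decide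
  have hIoc01 : Finset.Ioc 0 1 = ({1} : Finset ℕ) := by decide
  have hIoc12 : Finset.Ioc 1 2 = ({2} : Finset ℕ) := by decide
  have hsig : ∀ w : List (Fin d → ℕ), (∀ a ∈ w, a ≠ 0) → ISS z 0 2 w = ISS z' 0 1 w := by
    intro w hw
    match w with
    | [] => rfl
    | [α] =>
      have hα := sum_pos_of_ne_zero (hw α (by simp))
      show (∑ j ∈ Finset.Ioc 0 2, monom (z j) α * ISS z j 2 [])
          = ∑ j ∈ Finset.Ioc 0 1, monom (z' j) α * ISS z' j 1 []
      rw [hIoc02, hIoc01]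
      rw [Finset.sum_pair (by norm_num : (1:ℕ) ≠ 2), Finset.sum_singleton]
      show monom (z 1) α * 1 + monom (z 2) α * 1 = monom (z' 1) α * 1
      rw [hz1, hz2, hz'1, monom_const, monom_const, monom_const, hpow _ hα]
      ring
    | α :: β :: w' =>
      have hα := sum_pos_of_ne_zero (hw α (by simp))
      have hβ := sum_pos_of_ne_zero (hw β (by simp))
      have hL : ISS z 0 2 (α :: β :: w') = 0 := by
        show (∑ j ∈ Finset.Ioc 0 2, monom (z j) α * ISS z j 2 (β :: w')) = 0
        rw [hIoc02, Finset.sum_pair (by norm_num : (1:ℕ) ≠ 2)]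
        rw [ISS_self z 2 β w']
        have h12 : ISS z 1 2 (β :: w') = monom (z 2) β * ISS z 2 2 w' := by
          show (∑ j ∈ Finset.Ioc 1 2, monom (z j) β * ISS z j 2 w') = _
          rw [hIoc12, Finset.sum_singleton]
        rw [h12]
        match w' with
        | [] =>
          show monom (z 1) α * (monom (z 2) β * 1) + monom (z 2) α * 0 = 0
          rw [hz1, hz2, monom_const, monom_const, mul_one, hcross _ _ hα hβ, mul_zero, add_zero]
        | γ :: w'' =>
          rw [ISS_self z 2 γ w'']
          ring
      have hR : ISS z' 0 1 (α :: β :: w') = 0 := by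
        show (∑ j ∈ Finset.Ioc 0 1, monom (z' j) α * ISS z' j 1 (β :: w')) = 0
        rw [hIoc01, Finset.sum_singleton, ISS_self z' 1 β w', mul_zero]
      rw [hL, hR]
  have hcomp := hsep z z' 2 1 hN hN' hsig
  -- compute compressions
  have hva : (fun _ : Fin d => a) ≠ (0 : Fin d → S) := by
    intro h; exact ha (congrFun h ⟨0, hd⟩)
  have hvb : (fun _ : Fin d => b) ≠ (0 : Fin d → S) := by
    intro h; exact hb (congrFun h ⟨0, hd⟩)
  have hcz : compress z 2 = [fun _ => a, fun _ => b] := by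
    show (((List.range' 1 2).map z).filter _) = _
    have : List.range' 1 2 = [1, 2] := by decide
    rw [this]
    simp [List.filter, hz1, hz2, hva, hvb]
  have hlen : (compress z' 1).length ≤ 1 := by
    calc (compress z' 1).length ≤ ((List.range' 1 1).map z').length :=
          List.length_filter_le _ _
      _ = 1 := by simp
  rw [← hcomp, hcz] at hlen
  simp at hlen
end

section
/- (Shuffle character property of the tropical non-strict signature) Let z = (z_1, z_2, …) be a sequence of real numbers, 0 ≤ s ≤ t integers, and v, w words with letters in ℤ \ {0}. Then ⟨ISS^{(idem)}_{s,t}(z), v⟩ + ⟨ISS^{(idem)}_{s,t}(z), w⟩ = min_r ⟨ISS^{(idem)}_{s,t}(z), r⟩, the minimum taken over all shuffles r of v and w, i.e. all words obtained by interleaving v and w while preserving the relative order of letters within each word (with the convention (+∞) + x = +∞). -/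
/-- The tropical (min-plus) **non-strict** iterated-sums signature coefficient
`⟨ISS^(idem)_{s,t}(z), w⟩ = min_{s < j_1 ≤ ⋯ ≤ j_k ≤ t} (w_1 z_{j_1} + ⋯ + w_k z_{j_k})`
of a real sequence `z`, for a word `w` with integer letters; it takes values in
`ℝ ∪ {+∞}` (with `(+∞) + x = +∞`), is `0` on the empty word, and `+∞` when the index
set is empty. -/
noncomputable def tropISS (z : ℕ → ℝ) : ℕ → ℕ → List ℤ → WithTop ℝ
  | _, _, [] => 0
  | s, t, a :: w =>
      (Finset.Ioc s t).inf fun j => (((a : ℝ) * z j : ℝ) : WithTop ℝ) + tropISS z (j - 1) t w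

/-- The multiset of all shuffles of two words: all words obtained by interleaving the
two words while preserving the relative order of letters within each word. -/
def shuffles {α : Type*} : List α → List α → Multiset (List α)
  | [], v => {v}
  | u, [] => {u}
  | a :: u, b :: v =>
      (shuffles u (b :: v)).map (a :: ·) + (shuffles (a :: u) v).map (b :: ·)
termination_by u v => u.length + v.length

/-!
Induct on `|v| + |w|`, for all `s` at once. For words `a :: u` and `b :: x`, the sum of the two
minima is a minimum over pairs `(j, k)` of first indices. On the part `j ≤ k` the minimum over `k`
is again a signature coefficient, that of `b :: x` on `(j - 1, t]` (this is where the
non-strict ordering `j_1 ≤ j_2 ≤ ⋯` is needed), and symmetrically for `k ≤ j`. This gives the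
first-letter recursion of the shuffle product, and the induction hypothesis for `(u, b :: x)` and
`(a :: u, x)` finishes the proof, since adding a constant commutes with taking minima.
-/

theorem Multiset.apply_inf_map_of_monotone {ι α β : Type*} [LinearOrder α] [OrderTop α]
    [SemilatticeInf β] [OrderTop β] {g : α → β} (hg : Monotone g) (htop : g ⊤ = ⊤)
    (m : Multiset ι) (f : ι → α) : g (m.map f).inf = (m.map (g ∘ f)).inf := by
  induction m using Multiset.induction_on with
  | empty => simpa using htop
  | cons i m ih => simp [hg.map_inf, ih]

theorem Finset.inf_multisetInf_map_comm {ι κ α : Type*} [SemilatticeInf α] [OrderTop α]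
    (s : Finset ι) (m : Multiset κ) (f : ι → κ → α) :
    (s.inf fun i => (m.map (f i)).inf) = (m.map fun k => s.inf fun i => f i k).inf := by
  induction m using Multiset.induction_on with
  | empty => simp
  | cons k m ih => simp only [Multiset.map_cons, Multiset.inf_cons, ← ih]; exact Finset.inf_inf

section LinearOrderedAddCommMonoidWithTop

variable {α : Type*} [LinearOrderedAddCommMonoidWithTop α]

theorem Multiset.add_inf_map {ι : Type*} (c : α) (m : Multiset ι) (f : ι → α) :
    c + (m.map f).inf = (m.map fun i => c + f i).inf :=
  m.apply_inf_map_of_monotone add_right_mono (add_top c) f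

theorem Finset.inf_add_inf {ι κ : Type*} (s : Finset ι) (t : Finset κ) (f : ι → α) (g : κ → α) :
    s.inf f + t.inf g = s.inf fun i => t.inf fun j => f i + g j := by
  rw [Finset.apply_inf_eq_inf_comp_of_linearOrder (· + t.inf g) add_left_mono (top_add _)]
  refine Finset.inf_congr rfl fun i _ => ?_
  exact Finset.apply_inf_eq_inf_comp_of_linearOrder (f i + ·) add_right_mono (add_top _)

end LinearOrderedAddCommMonoidWithTop

section tropISS

variable (z : ℕ → ℝ) (t : ℕ)

theorem tropISS_nil (s : ℕ) : tropISS z s t [] = 0 := by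
  rw [tropISS]

theorem tropISS_cons (s : ℕ) (a : ℤ) (w : List ℤ) :
    tropISS z s t (a :: w) =
      (Finset.Ioc s t).inf fun j => ((a * z j : ℝ) : WithTop ℝ) + tropISS z (j - 1) t w := by
  rw [tropISS]

variable {z t}

theorem tropISS_cons_le {s j : ℕ} (hj : j ∈ Finset.Ioc s t) (a : ℤ) (w : List ℤ) :
    tropISS z s t (a :: w) ≤ ((a * z j : ℝ) : WithTop ℝ) + tropISS z (j - 1) t w := by
  rw [tropISS_cons]
  exact Finset.inf_le hj

theorem tropISS_mono {s s' : ℕ} (h : s ≤ s') (w : List ℤ) :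
    tropISS z s t w ≤ tropISS z s' t w := by
  cases w with
  | nil => simp only [tropISS_nil, le_refl]
  | cons a w => simpa only [tropISS_cons] using Finset.inf_mono (Finset.Ioc_subset_Ioc_left h)

theorem inf_map_tropISS_cons (s : ℕ) (a : ℤ) (m : Multiset (List ℤ)) :
    (m.map fun r => tropISS z s t (a :: r)).inf =
      (Finset.Ioc s t).inf fun j =>
        ((a * z j : ℝ) : WithTop ℝ) + (m.map (tropISS z (j - 1) t)).inf := by
  simp only [tropISS_cons, Multiset.add_inf_map, Finset.inf_multisetInf_map_comm]

theorem tropISS_cons_add_tropISS_cons (s : ℕ) (a b : ℤ) (u x : List ℤ) :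
    tropISS z s t (a :: u) + tropISS z s t (b :: x) =
      ((Finset.Ioc s t).inf fun j =>
        ((a * z j : ℝ) : WithTop ℝ) + (tropISS z (j - 1) t u + tropISS z (j - 1) t (b :: x))) ⊓
      ((Finset.Ioc s t).inf fun k =>
        ((b * z k : ℝ) : WithTop ℝ) + (tropISS z (k - 1) t (a :: u) + tropISS z (k - 1) t x)) := by
  apply le_antisymm
  · refine le_inf (Finset.le_inf fun j hj => ?_) (Finset.le_inf fun k hk => ?_)
    · have hs : s ≤ j - 1 := by grind
      grw [tropISS_cons_le hj, tropISS_mono hs, add_assoc]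
    · have hs : s ≤ k - 1 := by grind
      grw [tropISS_cons_le hk b x, tropISS_mono hs, add_left_comm]
  · rw [tropISS_cons, tropISS_cons, Finset.inf_add_inf]
    refine Finset.le_inf fun j hj => Finset.le_inf fun k hk => ?_
    rw [Finset.mem_Ioc] at hj hk
    rcases le_total j k with hjk | hkj
    · have hk' : k ∈ Finset.Ioc (j - 1) t := Finset.mem_Ioc.2 ⟨by omega, hk.2⟩
      grw [inf_le_left, Finset.inf_le (Finset.mem_Ioc.2 hj), tropISS_cons_le hk', add_assoc]
    · have hj' : j ∈ Finset.Ioc (k - 1) t := Finset.mem_Ioc.2 ⟨by omega, hj.2⟩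
      grw [inf_le_right, Finset.inf_le (Finset.mem_Ioc.2 hk), tropISS_cons_le hj', add_left_comm]

end tropISS

/-- **Shuffle character property of the tropical non-strict signature.** For a real
sequence `z`, integers `0 ≤ s ≤ t`, and words `v, w` with letters in `ℤ \ {0}`:
`⟨ISS^(idem)_{s,t}(z), v⟩ + ⟨ISS^(idem)_{s,t}(z), w⟩ = min_r ⟨ISS^(idem)_{s,t}(z), r⟩`,
the minimum over all shuffles `r` of `v` and `w`. -/
theorem trop_issi_shuffle_character (z : ℕ → ℝ) (s t : ℕ)
    (v w : List ℤ) :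
    tropISS z s t v + tropISS z s t w = ((shuffles v w).map (tropISS z s t)).inf := by
  match v, w with
  | [], w => simp [shuffles, tropISS_nil]
  | a :: u, [] => simp [shuffles, tropISS_nil]
  | a :: u, b :: x =>
    rw [tropISS_cons_add_tropISS_cons, shuffles, Multiset.map_add, Multiset.inf_add,
      Multiset.map_map, Multiset.map_map]
    simp only [Function.comp_def, inf_map_tropISS_cons,
      ← trop_issi_shuffle_character z _ t u (b :: x),
      ← trop_issi_shuffle_character z _ t (a :: u) x]
termination_by v.length + w.length
end
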